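/- arXiv:1107.5528 — 3 statements merged into one kernel-verified Lean document; each statement's English description precedes it below -/
import Mathlib

section
/- If pairwise two-coordinate value comparisons agree, discount vector segments are proportional: let (x₁, x₂) and (y₁, y₂) be vectors in ℝ² with x₁, x₂ ≥ 0, not both zero, and y₁, y₂ ≥ 0. Suppose for all r₁, r₂ ∈ [0,1]: r₁·x₁ - r₂·x₂ ≥ 0 ↔ r₁·y₁ - r₂·y₂ ≥ 0. Then there exists α ≥ 0 with (y₁, y₂) = α · (x₁, x₂). -/
/-- If pairwise two-coordinate value comparisons agree, discount vector segments
are proportional. -/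
theorem stmt2 (x₁ x₂ y₁ y₂ : ℝ) (hx₁ : 0 ≤ x₁) (hx₂ : 0 ≤ x₂)
    (hx : x₁ ≠ 0 ∨ x₂ ≠ 0) (hy₁ : 0 ≤ y₁) (hy₂ : 0 ≤ y₂)
    (h : ∀ r₁ r₂ : ℝ, r₁ ∈ Set.Icc (0 : ℝ) 1 → r₂ ∈ Set.Icc (0 : ℝ) 1 →
      (0 ≤ r₁ * x₁ - r₂ * x₂ ↔ 0 ≤ r₁ * y₁ - r₂ * y₂)) :
    ∃ α : ℝ, 0 ≤ α ∧ y₁ = α * x₁ ∧ y₂ = α * x₂ := by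
  rcases eq_or_lt_of_le hx₁ with h1 | h1
  · -- x₁ = 0, so x₂ > 0
    have hx2 : 0 < x₂ := by
      rcases hx with hx | hx
      · exact absurd h1.symm hx
      · exact lt_of_le_of_ne hx₂ (Ne.symm hx)
    have hy1 : y₁ = 0 := by
      by_contra hne
      have hy1p : 0 < y₁ := lt_of_le_of_ne hy₁ (Ne.symm hne)
      rcases eq_or_lt_of_le hy₂ with h2 | h2
      · have := (h 1 1 (by norm_num) (by norm_num)).mpr (by nlinarith)
        nlinarith
      · set r₂ : ℝ := min 1 (y₁ / y₂) with hr₂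
        have hr₂0 : 0 < r₂ := lt_min one_pos (div_pos hy1p h2)
        have hr₂1 : r₂ ≤ 1 := min_le_left _ _
        have hy : 0 ≤ 1 * y₁ - r₂ * y₂ := by
          have : r₂ * y₂ ≤ (y₁ / y₂) * y₂ :=
            mul_le_mul_of_nonneg_right (min_le_right _ _) hy₂
          rw [div_mul_cancel₀ _ (ne_of_gt h2)] at this
          linarith
        have := (h 1 r₂ (by norm_num) ⟨le_of_lt hr₂0, hr₂1⟩).mpr hy
        nlinarith
    exact ⟨y₂ / x₂, div_nonneg hy₂ hx₂, by simp [hy1, ← h1],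
      (div_mul_cancel₀ _ (ne_of_gt hx2)).symm⟩
  · rcases eq_or_lt_of_le hx₂ with h2 | h2
    · -- x₂ = 0, x₁ > 0
      have hy2 : y₂ = 0 := by
        by_contra hne
        have hy2p : 0 < y₂ := lt_of_le_of_ne hy₂ (Ne.symm hne)
        rcases eq_or_lt_of_le hy₁ with h3 | h3
        · have := (h 1 1 (by norm_num) (by norm_num)).mp (by nlinarith)
          nlinarith
        · set r₁ : ℝ := min 1 (y₂ / (2 * y₁)) with hr₁
          have hr₁0 : 0 < r₁ := lt_min one_pos (div_pos hy2p (by linarith))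
          have hkey := (h r₁ 1 ⟨le_of_lt hr₁0, min_le_left _ _⟩ (by norm_num)).mp
            (by nlinarith)
          have hle : r₁ * y₁ ≤ (y₂ / (2 * y₁)) * y₁ :=
            mul_le_mul_of_nonneg_right (min_le_right _ _) hy₁
          have heq : (y₂ / (2 * y₁)) * y₁ = y₂ / 2 := by field_simp
          nlinarith
      exact ⟨y₁ / x₁, div_nonneg hy₁ hx₁,
        (div_mul_cancel₀ _ (ne_of_gt h1)).symm, by simp [hy2, ← h2]⟩
    · -- x₁ > 0, x₂ > 0
      set M : ℝ := max x₁ x₂ with hM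
      have hM0 : 0 < M := lt_of_lt_of_le h1 (le_max_left _ _)
      set r₁ : ℝ := x₂ / M
      set r₂ : ℝ := x₁ / M
      have hr₁m : r₁ ∈ Set.Icc (0:ℝ) 1 :=
        ⟨div_nonneg hx₂ hM0.le, div_le_one_of_le₀ (le_max_right _ _) hM0.le⟩
      have hr₂m : r₂ ∈ Set.Icc (0:ℝ) 1 :=
        ⟨div_nonneg hx₁ hM0.le, div_le_one_of_le₀ (le_max_left _ _) hM0.le⟩
      have hbal : r₁ * x₁ - r₂ * x₂ = 0 := by ring
      have hge : 0 ≤ r₁ * y₁ - r₂ * y₂ := (h r₁ r₂ hr₁m hr₂m).mp (le_of_eq hbal.symm)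
      have e1 : r₁ * M = x₂ := div_mul_cancel₀ _ hM0.ne'
      have e2 : r₂ * M = x₁ := div_mul_cancel₀ _ hM0.ne'
      have hD : 0 ≤ x₂ * y₁ - x₁ * y₂ := by
        nlinarith [mul_nonneg hge hM0.le]
      have hDeq : x₂ * y₁ = x₁ * y₂ := by
        by_contra hne
        have hDpos : 0 < x₂ * y₁ - x₁ * y₂ := by
          rcases lt_or_eq_of_le hD with hlt | heq
          · exact hlt
          · exact absurd (by linarith) hne
        set ε : ℝ := min r₁ ((x₂ * y₁ - x₁ * y₂) / (M * (y₁ + 1))) with hε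
        have hr₁pos : 0 < r₁ := div_pos h2 hM0
        have hε0 : 0 < ε := lt_min hr₁pos
          (div_pos hDpos (mul_pos hM0 (by linarith)))
        have hεr : ε ≤ r₁ := min_le_left _ _
        have hmem : r₁ - ε ∈ Set.Icc (0:ℝ) 1 :=
          ⟨by linarith, by linarith [hr₁m.2, hε0]⟩
        have hgeq : (r₁ * y₁ - r₂ * y₂) * M = x₂ * y₁ - x₁ * y₂ := by
          linear_combination y₁ * e1 - y₂ * e2
        have hεle : ε ≤ (x₂ * y₁ - x₁ * y₂) / (M * (y₁ + 1)) := min_le_right _ _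
        have key : ε * (y₁ * M) ≤ x₂ * y₁ - x₁ * y₂ := by
          calc ε * (y₁ * M)
              ≤ (x₂ * y₁ - x₁ * y₂) / (M * (y₁ + 1)) * (y₁ * M) :=
                mul_le_mul_of_nonneg_right hεle (mul_nonneg hy₁ hM0.le)
            _ ≤ x₂ * y₁ - x₁ * y₂ := by
                rw [div_mul_eq_mul_div, div_le_iff₀ (mul_pos hM0 (by linarith))]
                nlinarith
        have hyineq : 0 ≤ (r₁ - ε) * y₁ - r₂ * y₂ := by nlinarith
        have hcon := (h (r₁ - ε) r₂ hmem hr₂m).mpr hyineq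
        nlinarith [mul_pos hε0 h1]
      refine ⟨y₁ / x₁, div_nonneg hy₁ h1.le,
        (div_mul_cancel₀ _ h1.ne').symm, ?_⟩
      field_simp
      linarith
end

section
/- Existence of optimal policy for summable discounting: let A be a finite nonempty type, Π = (ℕ → A), and suppose rewards r : (list A) → [0,1] assign a reward to each finite action prefix; define V(π) = ∑'_{t} d(t) · r(π(0), …, π(t−1)) where d : ℕ → ℝ is nonnegative and summable. Then there exists π* ∈ Π with V(π*) ≥ V(π) for all π ∈ Π. -/
/-- Existence of an optimal policy for summable discounting in a deterministic
environment. -/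
theorem stmt8 {A : Type*} [Fintype A] [Nonempty A]
    (d : ℕ → ℝ) (hd0 : ∀ t, 0 ≤ d t) (hds : Summable d)
    (r : List A → ℝ) (hr : ∀ l, r l ∈ Set.Icc (0 : ℝ) 1) :
    ∃ πstar : ℕ → A, ∀ π : ℕ → A,
      (∑' t : ℕ, d t * r (List.ofFn fun i : Fin t => π i)) ≤
        ∑' t : ℕ, d t * r (List.ofFn fun i : Fin t => πstar i) := by
  letI : TopologicalSpace A := ⊥
  haveI : DiscreteTopology A := ⟨rfl⟩
  set V : (ℕ → A) → ℝ := fun π => ∑' t : ℕ, d t * r (List.ofFn fun i : Fin t => π i) with hV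
  have hcont : Continuous V := by
    apply continuous_tsum (u := d) ?_ hds ?_
    · intro t
      have h1 : Continuous fun π : ℕ → A => (fun i : Fin t => π i) :=
        continuous_pi fun i => continuous_apply _
      have h2 : Continuous fun f : Fin t → A => d t * r (List.ofFn f) :=
        continuous_of_discreteTopology
      exact h2.comp h1
    · intro t π
      have h := hr (List.ofFn fun i : Fin t => π i)
      rw [Real.norm_eq_abs, abs_of_nonneg (mul_nonneg (hd0 t) h.1)]
      calc d t * r _ ≤ d t * 1 := mul_le_mul_of_nonneg_left h.2 (hd0 t)
        _ = d t := mul_one _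
  obtain ⟨π, -, hπ⟩ := isCompact_univ.exists_isMaxOn
    (Set.univ_nonempty) hcont.continuousOn
  exact ⟨π, fun π' => hπ (Set.mem_univ π')⟩
end

section
/- Constant-horizon discounting with H = 2 is time-inconsistent: define d k t = 1 if t − k < 2 (i.e., t ∈ {k, k+1}) and 0 otherwise. There is no family of positive scalars α_k with d k t = α_k · d 1 t for all t ≥ k ≥ 1. Consequently (using the characterization), there exists an environment in which the d 1-optimal and d 2-optimal policies differ. -/
/-- Constant-horizon discounting with `H = 2` is time-inconsistent: no family
of positive scalars makes the columns proportional to the first, and there is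
an environment in which the `d 1`-optimal and `d 2`-optimal policies differ. -/
theorem stmt14 (d : ℕ → ℕ → ℝ)
    (hd : ∀ k t, d k t = if k ≤ t ∧ t < k + 2 then 1 else 0) :
    (¬ ∃ α : ℕ → ℝ, (∀ k, 1 ≤ k → 0 < α k) ∧
      ∀ k t, 1 ≤ k → k ≤ t → d k t = α k * d 1 t) ∧
    ∃ (P : Type) (_ : Nonempty P) (R : P → ℕ → ℝ),
      (∀ π i, R π i ∈ Set.Icc (0 : ℝ) 1) ∧
      ∃ π₁ : P, (∀ π' : P, ∑' t, R π' t * d 1 t ≤ ∑' t, R π₁ t * d 1 t) ∧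
        ∀ π₂ : P, (∀ π' : P, ∑' t, R π' t * d 2 t ≤ ∑' t, R π₂ t * d 2 t) →
          π₂ ≠ π₁ := by
  have hd13 : d 1 3 = 0 := by rw [hd]; norm_num
  have hd23 : d 2 3 = 1 := by rw [hd]; norm_num
  have hd12 : d 1 2 = 1 := by rw [hd]; norm_num
  have hd22 : d 2 2 = 1 := by rw [hd]; norm_num
  constructor
  · rintro ⟨α, hpos, hα⟩
    have := hα 2 3 (by norm_num) (by norm_num)
    rw [hd13, hd23, mul_zero] at this
    norm_num at this
  · refine ⟨Bool, ⟨true⟩, fun π t => if π = true then (if t = 2 then 1/2 else 0)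
      else (if t = 3 then 1 else 0), ?_, true, ?_, ?_⟩
    · intro π i
      cases π <;> simp <;> split <;> norm_num
    · -- d1 values: true = 1/2, false = 0
      have htrue : ∑' t, (if (true : Bool) = true then (if t = 2 then (1:ℝ)/2 else 0)
          else (if t = 3 then 1 else 0)) * d 1 t = 1/2 := by
        rw [tsum_eq_single 2]
        · simp [hd12]
        · intro b hb; simp [hb]
      have hfalse : ∑' t, (if (false : Bool) = true then (if t = 2 then (1:ℝ)/2 else 0)
          else (if t = 3 then 1 else 0)) * d 1 t = 0 := by
        rw [tsum_eq_single 3]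
        · simp [hd13]
        · intro b hb; simp [hb]
      intro π'
      cases π'
      · rw [hfalse, htrue]; norm_num
      · rw [htrue]
    · -- d2 values: true = 1/2, false = 1
      have htrue : ∑' t, (if (true : Bool) = true then (if t = 2 then (1:ℝ)/2 else 0)
          else (if t = 3 then 1 else 0)) * d 2 t = 1/2 := by
        rw [tsum_eq_single 2]
        · simp [hd22]
        · intro b hb; simp [hb]
      have hfalse : ∑' t, (if (false : Bool) = true then (if t = 2 then (1:ℝ)/2 else 0)
          else (if t = 3 then 1 else 0)) * d 2 t = 1 := by
        rw [tsum_eq_single 3]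
        · simp [hd23]
        · intro b hb; simp [hb]
      intro π₂ hopt
      cases π₂
      · simp
      · exfalso
        have := hopt false
        rw [htrue, hfalse] at this
        norm_num at this
end
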